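/- arXiv:1907.12605 — 2 statements merged into one kernel-verified Lean document; each statement's English description precedes it below -/
import Mathlib

section
/- (A posteriori reliability under saturation) Assume the hypotheses of the saddle-point problem with inf-sup constant C_sta > 0, let u be the exact solution (with b_h(u, v_h) = l_h(v_h) for all v_h ∈ V_h), let θ_h solve the discrete primal problem, and let (ε_h, u_h) solve the saddle-point problem. If the saturation assumption holds, i.e., ‖u − θ_h‖_{V_h} ≤ δ ‖u − u_h‖_{V_h} for some δ ∈ [0,1), then ‖u − u_h‖_{V_h} ≤ (1/((1−δ) C_sta)) ‖ε_h‖_{V_h}. -/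
open scoped RealInnerProductSpace

/-- A posteriori reliability under the saturation assumption
`‖u − θ_h‖ ≤ δ ‖u − u_h‖` with `δ ∈ [0,1)`:
`‖u − u_h‖_{V_h} ≤ (1/((1−δ) C_sta)) ‖ε_h‖_{V_h}`. -/
theorem reliability_saturation {X : Type*} [NormedAddCommGroup X] [InnerProductSpace ℝ X]
    (Vh : Submodule ℝ X) [FiniteDimensional ℝ Vh]
    (Uh : Submodule ℝ X) (hUV : Uh ≤ Vh)
    (b : X →ₗ[ℝ] X →ₗ[ℝ] ℝ) (Csta : ℝ) (hCsta : 0 < Csta)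
    (hinfsup : ∀ z ∈ Vh, z ≠ 0 →
      Csta ≤ sSup {r : ℝ | ∃ v ∈ Vh, v ≠ 0 ∧ r = b z v / (‖z‖ * ‖v‖)})
    (u : X) (l : X → ℝ) (hcons : ∀ v ∈ Vh, b u v = l v)
    (θ : X) (hθV : θ ∈ Vh) (hθ : ∀ v ∈ Vh, b θ v = l v)
    (ε uh : X) (hεV : ε ∈ Vh) (huU : uh ∈ Uh)
    (hmix1 : ∀ v ∈ Vh, ⟪ε, v⟫ + b uh v = l v)
    (hmix2 : ∀ z ∈ Uh, b z ε = 0)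
    (δ : ℝ) (hδ0 : 0 ≤ δ) (hδ1 : δ < 1)
    (hsat : ‖u - θ‖ ≤ δ * ‖u - uh‖) :
    ‖u - uh‖ ≤ (1 / ((1 - δ) * Csta)) * ‖ε‖ := by
  have huhV : uh ∈ Vh := hUV huU
  have hpos : 0 < (1 - δ) * Csta := mul_pos (sub_pos.mpr hδ1) hCsta
  set z := θ - uh with hz
  have hzV : z ∈ Vh := Vh.sub_mem hθV huhV
  rw [div_mul_eq_mul_div, one_mul, le_div_iff₀ hpos]
  rcases eq_or_ne z 0 with h0 | h0
  · have hθu : θ = uh := by rwa [sub_eq_zero] at h0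
    rw [hθu] at hsat
    nlinarith [norm_nonneg (u - uh), norm_nonneg ε, hCsta]
  · have hzpos : 0 < ‖z‖ := norm_pos_iff.mpr h0
    have hsup := hinfsup z hzV h0
    have hbound : sSup {r : ℝ | ∃ v ∈ Vh, v ≠ 0 ∧ r = b z v / (‖z‖ * ‖v‖)}
        ≤ ‖ε‖ / ‖z‖ := by
      apply Real.sSup_le _ (div_nonneg (norm_nonneg _) (norm_nonneg _))
      rintro x ⟨v, hvV, hv0, rfl⟩
      have hvpos : 0 < ‖v‖ := norm_pos_iff.mpr hv0
      have hbz : b z v = ⟪ε, v⟫ := by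
        have h1 := hθ v hvV
        have h2 := hmix1 v hvV
        simp only [hz, map_sub, LinearMap.sub_apply]
        linarith
      rw [hbz, div_le_div_iff₀ (by positivity) hzpos]
      have hcs := real_inner_le_norm ε v
      nlinarith [hzpos, hvpos, norm_nonneg ε]
    have hkey : Csta * ‖z‖ ≤ ‖ε‖ := (le_div_iff₀ hzpos).mp (hsup.trans hbound)
    have htri : ‖u - uh‖ ≤ ‖u - θ‖ + ‖z‖ := by
      calc ‖u - uh‖ = ‖(u - θ) + z‖ := by rw [hz, sub_add_sub_cancel]
        _ ≤ ‖u - θ‖ + ‖z‖ := norm_add_le _ _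
    nlinarith [hCsta, hzpos]
end

section
/- (A posteriori reliability under the weaker condition) With the same setting as the saturation result, if instead the weaker assumption ‖u − θ_h‖_{V_h} ≤ δ_w ‖θ_h − u_h‖_{V_h} holds for some δ_w > 0, then ‖u − u_h‖_{V_h} ≤ ((1 + δ_w)/C_sta) ‖ε_h‖_{V_h}. -/
open scoped RealInnerProductSpace

/-- A posteriori reliability under the weaker condition
`‖u − θ_h‖ ≤ δ_w ‖θ_h − u_h‖` with `δ_w > 0`:
`‖u − u_h‖_{V_h} ≤ ((1 + δ_w)/C_sta) ‖ε_h‖_{V_h}`. -/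
theorem reliability_weaker {X : Type*} [NormedAddCommGroup X] [InnerProductSpace ℝ X]
    (Vh : Submodule ℝ X) [FiniteDimensional ℝ Vh]
    (Uh : Submodule ℝ X) (hUV : Uh ≤ Vh)
    (b : X →ₗ[ℝ] X →ₗ[ℝ] ℝ) (Csta : ℝ) (hCsta : 0 < Csta)
    (hinfsup : ∀ z ∈ Vh, z ≠ 0 →
      Csta ≤ sSup {r : ℝ | ∃ v ∈ Vh, v ≠ 0 ∧ r = b z v / (‖z‖ * ‖v‖)})
    (u : X) (l : X → ℝ) (hcons : ∀ v ∈ Vh, b u v = l v)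
    (θ : X) (hθV : θ ∈ Vh) (hθ : ∀ v ∈ Vh, b θ v = l v)
    (ε uh : X) (hεV : ε ∈ Vh) (huU : uh ∈ Uh)
    (hmix1 : ∀ v ∈ Vh, ⟪ε, v⟫ + b uh v = l v)
    (hmix2 : ∀ z ∈ Uh, b z ε = 0)
    (δw : ℝ) (hδw : 0 < δw)
    (hweak : ‖u - θ‖ ≤ δw * ‖θ - uh‖) :
    ‖u - uh‖ ≤ ((1 + δw) / Csta) * ‖ε‖ := by
  have hzV : θ - uh ∈ Vh := Vh.sub_mem hθV (hUV huU)
  have hbz : ∀ v ∈ Vh, b (θ - uh) v = ⟪ε, v⟫ := by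
    intro v hv
    have h1 := hmix1 v hv
    have h2 := hθ v hv
    simp only [map_sub, LinearMap.sub_apply]
    linarith
  by_cases hz : θ - uh = 0
  · have hθu : θ = uh := sub_eq_zero.mp hz
    have huθ : u = θ := by
      have h0 : ‖u - θ‖ ≤ 0 := by simpa [hθu] using hweak
      have h1 : ‖u - θ‖ = 0 := le_antisymm h0 (norm_nonneg _)
      exact sub_eq_zero.mp (norm_eq_zero.mp h1)
    have : u - uh = 0 := by rw [huθ, hθu]; simp
    rw [this]
    simp only [norm_zero]
    positivity
  · have hzn : (0:ℝ) < ‖θ - uh‖ := norm_pos_iff.mpr hz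
    have key : Csta ≤ ‖ε‖ / ‖θ - uh‖ := by
      refine le_trans (hinfsup _ hzV hz) (Real.sSup_le ?_ (by positivity))
      rintro r ⟨v, hv, hv0, rfl⟩
      rw [hbz v hv]
      have hCS : ⟪ε, v⟫ ≤ ‖ε‖ * ‖v‖ := real_inner_le_norm ε v
      have hvn : (0:ℝ) < ‖v‖ := norm_pos_iff.mpr hv0
      rw [div_le_div_iff₀ (by positivity) hzn]
      nlinarith
    have h1 : Csta * ‖θ - uh‖ ≤ ‖ε‖ := (le_div_iff₀ hzn).mp key
    have h2 : ‖θ - uh‖ ≤ ‖ε‖ / Csta := by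
      rw [le_div_iff₀ hCsta]; linarith
    calc ‖u - uh‖ ≤ ‖u - θ‖ + ‖θ - uh‖ := norm_sub_le_norm_sub_add_norm_sub u θ uh
      _ ≤ δw * ‖θ - uh‖ + ‖θ - uh‖ := by linarith
      _ = (1 + δw) * ‖θ - uh‖ := by ring
      _ ≤ (1 + δw) * (‖ε‖ / Csta) := by nlinarith
      _ = ((1 + δw) / Csta) * ‖ε‖ := by ring
end
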